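/- Let γ, σ² : [0,1] → ℝ be continuous with σ²(u) > 0 for all u ∈ [0,1] (condition (UE)), let Γ(u) := ∫₀^u γ(v) dv, g := ∫₀¹ γ(v) dv, assume (E1): Γ(u) − g·u > 0 for all u ∈ (0,1), let Ψ(u) := ∫_{1/2}^u σ²(v)/(2(Γ(v) − g·v)) dv, and let p_c := 2(g − γ(1))/σ²(1) ≥ 0. Then for every p > p_c one has Z̄^p := ∫₀¹ exp(p·Ψ(u)) du = +∞ (this includes the heavy-tailed case p_c = 0, i.e. γ(1) = g). -/

import Mathlib

/-! Since `Γ(1) = g`, the fundamental theorem of calculus gives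
`(Γ(v) - g v) / (1 - v) → g - γ(1)` as `v → 1⁻`, and `p > p_c` means `2 (g - γ(1)) < p σ²(1)`.
Hence for some `q > 1` the integrand of `p Ψ` is at least `q / (1 - v)` near `1`; integrating,
`exp (p Ψ(u)) ≥ C (1 - u)^(-q)`, which is not integrable at `1`. -/

open MeasureTheory Set Filter Topology

/-- `Γ(u) = ∫₀^u γ(v) dv`. -/
noncomputable def Gam (γ : ℝ → ℝ) (u : ℝ) : ℝ := ∫ v in (0:ℝ)..u, γ v

/-- market mean growth rate `g = ∫₀¹ γ(v) dv`. -/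
noncomputable def mg (γ : ℝ → ℝ) : ℝ := ∫ v in (0:ℝ)..1, γ v

/-- `Ψ(u) = ∫_{1/2}^u σ²(v) / (2 (Γ(v) - g v)) dv`. -/
noncomputable def Psi (γ σ2 : ℝ → ℝ) (u : ℝ) : ℝ :=
  ∫ v in (1/2:ℝ)..u, σ2 v / (2 * (Gam γ v - mg γ * v))

/-- critical diversity index `p_c = 2 (g - γ(1)) / σ²(1)`. -/
noncomputable def pcrit (γ σ2 : ℝ → ℝ) : ℝ := 2 * (mg γ - γ 1) / σ2 1

/-- critical index `q_c = 2 (γ(0) - g) / σ²(0)`. -/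
noncomputable def qcrit (γ σ2 : ℝ → ℝ) : ℝ := 2 * (γ 0 - mg γ) / σ2 0

theorem mul_log_div_le_integral {f : ℝ → ℝ} {a u q : ℝ} (hau : a ≤ u) (hu : u < 1)
    (hf : IntervalIntegrable f volume a u) (hle : ∀ v ∈ Icc a u, q / (1 - v) ≤ f v) :
    q * Real.log ((1 - a) / (1 - u)) ≤ ∫ v in a..u, f v := by
  have hne : ∀ v ∈ Icc a u, 1 - v ≠ 0 := fun v hv => (sub_pos.2 (hv.2.trans_lt hu)).ne'
  have h0 : (0:ℝ) ∉ uIcc (1 - u) (1 - a) := by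
    rw [uIcc_of_le (by linarith)]
    exact fun h => by linarith [h.1]
  calc q * Real.log ((1 - a) / (1 - u)) = ∫ v in a..u, q / (1 - v) := by
        simp_rw [div_eq_mul_inv q]
        rw [intervalIntegral.integral_const_mul,
          intervalIntegral.integral_comp_sub_left (fun x => x⁻¹), integral_inv h0]
    _ ≤ ∫ v in a..u, f v := by
        refine intervalIntegral.integral_mono_on hau ?_ hf hle
        refine ContinuousOn.intervalIntegrable ?_
        rw [uIcc_of_le hau]
        exact continuousOn_const.div (continuousOn_const.sub continuousOn_id) hne

theorem not_integrableOn_Ioo_one_sub_rpow_neg {a q : ℝ} (ha : a < 1) (hq : 1 ≤ q) :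
    ¬ IntegrableOn (fun u => (1 - u) ^ (-q)) (Ioo a 1) := by
  intro h
  have hrefl := ((intervalIntegrable_iff_integrableOn_Ioo_of_le ha.le).2 h).comp_sub_left 1
  simp only [sub_sub_cancel, sub_self] at hrefl
  have h0 := (intervalIntegrable_iff_integrableOn_Ioo_of_le (sub_pos.2 ha).le).1 hrefl.symm
  rw [intervalIntegral.integrableOn_Ioo_rpow_iff (sub_pos.2 ha)] at h0
  linarith

theorem lintegral_Ioo_mul_one_sub_rpow_neg_eq_top {a q C : ℝ} (ha : a < 1) (hq : 1 ≤ q)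
    (hC : 0 < C) : ∫⁻ u in Ioo a 1, ENNReal.ofReal (C * (1 - u) ^ (-q)) = ⊤ := by
  have hcont : ContinuousOn (fun u => C * (1 - u) ^ (-q)) (Ioo a 1) :=
    continuousOn_const.mul ((continuousOn_const.sub continuousOn_id).rpow_const
      fun u hu => Or.inl (sub_pos.2 hu.2).ne')
  have hnn : 0 ≤ᵐ[volume.restrict (Ioo a 1)] fun u => C * (1 - u) ^ (-q) := by
    filter_upwards [ae_restrict_mem measurableSet_Ioo] with u hu
    exact mul_nonneg hC.le (Real.rpow_nonneg (sub_pos.2 hu.2).le _)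
  by_contra hfin
  have hint := (lintegral_ofReal_ne_top_iff_integrable
    (hcont.aestronglyMeasurable measurableSet_Ioo) hnn).1 hfin
  exact not_integrableOn_Ioo_one_sub_rpow_neg ha hq
    ((integrable_const_mul_iff (isUnit_iff_ne_zero.2 hC.ne') _).1 hint)

section

variable {γ σ2 : ℝ → ℝ}

theorem continuousOn_Gam (hγ : ContinuousOn γ (Icc 0 1)) :
    ContinuousOn (Gam γ) (Icc 0 1) := by
  rw [← uIcc_of_le zero_le_one] at hγ ⊢
  exact intervalIntegral.continuousOn_primitive_interval hγ.integrableOn_Icc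

theorem tendsto_Gam_sub_mul_div_one_sub (hγ : ContinuousOn γ (Icc 0 1)) :
    Tendsto (fun v => (Gam γ v - mg γ * v) / (1 - v)) (𝓝[<] 1) (𝓝 (mg γ - γ 1)) := by
  have hγ1 : ContinuousWithinAt γ (Iic 1) 1 := by
    rw [← continuousWithinAt_Icc_iff_Iic zero_lt_one]
    exact hγ 1 (right_mem_Icc.2 zero_le_one)
  have hmeas : StronglyMeasurableAtFilter γ (𝓝[≤] 1) := by
    rw [← nhdsWithin_Icc_eq_nhdsLE zero_lt_one]
    exact hγ.stronglyMeasurableAtFilter_nhdsWithin measurableSet_Icc 1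
  have hderiv : HasDerivWithinAt (fun v => Gam γ v - mg γ * v) (γ 1 - mg γ) (Iic 1) 1 :=
    (intervalIntegral.integral_hasDerivWithinAt_right
      (hγ.intervalIntegrable_of_Icc zero_le_one) hmeas hγ1).sub
      ((hasDerivWithinAt_id _ _).const_mul _ |>.congr_deriv (mul_one _))
  rw [hasDerivWithinAt_iff_tendsto_slope, Iic_sdiff_right] at hderiv
  have hGam1 : Gam γ 1 = mg γ := rfl
  rw [show mg γ - γ 1 = -(γ 1 - mg γ) by ring]
  refine hderiv.neg.congr fun v => ?_
  rw [slope_def_field, hGam1, mul_one, sub_self, sub_zero, ← neg_sub v 1, div_neg]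

theorem continuousOn_Psi_integrand (hγ : ContinuousOn γ (Icc 0 1))
    (hσ : ContinuousOn σ2 (Icc 0 1)) (hE1 : ∀ u ∈ Ioo (0:ℝ) 1, 0 < Gam γ u - mg γ * u) :
    ContinuousOn (fun v => σ2 v / (2 * (Gam γ v - mg γ * v))) (Ioo 0 1) :=
  (hσ.mono Ioo_subset_Icc_self).div
    (continuousOn_const.mul
      (((continuousOn_Gam hγ).sub (continuousOn_const.mul continuousOn_id)).mono
        Ioo_subset_Icc_self))
    fun v hv => (mul_pos two_pos (hE1 v hv)).ne'

theorem exists_one_lt_eventually_div_one_sub_lt (hγ : ContinuousOn γ (Icc 0 1))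
    (hσ : ContinuousOn σ2 (Icc 0 1)) (hσ1 : 0 < σ2 1)
    (hE1 : ∀ u ∈ Ioo (0:ℝ) 1, 0 < Gam γ u - mg γ * u) {p : ℝ} (hp : pcrit γ σ2 < p) :
    ∃ q, 1 < q ∧ ∀ᶠ v in 𝓝[<] 1, q / (1 - v) < p * (σ2 v / (2 * (Gam γ v - mg γ * v))) := by
  set L := mg γ - γ 1
  have hpS : 2 * L < p * σ2 1 := by rwa [pcrit, div_lt_iff₀ hσ1] at hp
  obtain ⟨q, hqL, hq⟩ : ∃ q, 2 * q * L < p * σ2 1 ∧ 1 < q := by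
    have hnear : ∀ᶠ q in 𝓝 (1:ℝ), 2 * q * L < p * σ2 1 :=
      (continuous_const.mul continuous_id |>.mul continuous_const).continuousAt.eventually_lt
        continuousAt_const (show 2 * 1 * L < p * σ2 1 by linarith)
    exact ((hnear.filter_mono nhdsWithin_le_nhds).and
      (self_mem_nhdsWithin : Ioi (1:ℝ) ∈ 𝓝[>] 1)).exists
  have hσ' : Tendsto σ2 (𝓝[<] 1) (𝓝 (σ2 1)) :=
    ((continuousWithinAt_Icc_iff_Iic zero_lt_one).1
      (hσ 1 (right_mem_Icc.2 zero_le_one))).mono Iio_subset_Iic_self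
  have hlim : Tendsto (fun v => 2 * q * ((Gam γ v - mg γ * v) / (1 - v)) - p * σ2 v) (𝓝[<] 1)
      (𝓝 (2 * q * L - p * σ2 1)) :=
    ((tendsto_Gam_sub_mul_div_one_sub hγ).const_mul _).sub (hσ'.const_mul p)
  refine ⟨q, hq, ?_⟩
  filter_upwards [hlim.eventually_lt_const (show 2 * q * L - p * σ2 1 < 0 by linarith),
    Ioo_mem_nhdsLT zero_lt_one] with v hv hv01
  have hFv := hE1 v hv01
  have h1v : 0 < 1 - v := sub_pos.2 hv01.2
  rw [sub_neg, mul_div_assoc', div_lt_iff₀ h1v] at hv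
  rw [mul_div_assoc', div_lt_div_iff₀ h1v (by positivity)]
  linarith

theorem exp_mul_one_sub_rpow_neg_le_exp_mul_Psi (hγ : ContinuousOn γ (Icc 0 1))
    (hσ : ContinuousOn σ2 (Icc 0 1)) (hE1 : ∀ u ∈ Ioo (0:ℝ) 1, 0 < Gam γ u - mg γ * u)
    {p q a u : ℝ} (ha : 1 / 2 ≤ a) (hu : u ∈ Ioo a 1)
    (hbound : ∀ v ∈ Ico a 1, q / (1 - v) ≤ p * (σ2 v / (2 * (Gam γ v - mg γ * v)))) :
    Real.exp (p * Psi γ σ2 a + q * Real.log (1 - a)) * (1 - u) ^ (-q) ≤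
      Real.exp (p * Psi γ σ2 u) := by
  have hψ {x y : ℝ} (hx : 1 / 2 ≤ x) (hy : y < 1) (hxy : x ≤ y) :
      IntervalIntegrable (fun v => σ2 v / (2 * (Gam γ v - mg γ * v))) volume x y := by
    refine ((continuousOn_Psi_integrand hγ hσ hE1).mono ?_).intervalIntegrable
    rw [uIcc_of_le hxy]
    exact Icc_subset_Ioo (by linarith) hy
  have hsplit : Psi γ σ2 u = Psi γ σ2 a + ∫ v in a..u, σ2 v / (2 * (Gam γ v - mg γ * v)) :=
    (intervalIntegral.integral_add_adjacent_intervals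
      (hψ le_rfl (hu.1.trans hu.2) ha) (hψ ha hu.2 hu.1.le)).symm
  have hlow := mul_log_div_le_integral hu.1.le hu.2
    ((hψ ha hu.2 hu.1.le).const_mul p)
    fun v hv => hbound v ⟨hv.1, hv.2.trans_lt hu.2⟩
  rw [intervalIntegral.integral_const_mul] at hlow
  have h1a : 0 < 1 - a := by linarith [hu.1, hu.2]
  have h1u : 0 < 1 - u := sub_pos.2 hu.2
  calc Real.exp (p * Psi γ σ2 a + q * Real.log (1 - a)) * (1 - u) ^ (-q)
      = Real.exp (p * Psi γ σ2 a + q * Real.log ((1 - a) / (1 - u))) := by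
        rw [Real.rpow_def_of_pos h1u, ← Real.exp_add, Real.log_div h1a.ne' h1u.ne']
        ring_nf
    _ ≤ Real.exp (p * Psi γ σ2 u) := Real.exp_le_exp.2 (by rw [hsplit]; linarith)

end

/-- under (UE) and (E1), for every p > p_c (≥ 0),
Z̄^p = ∫₀¹ exp(p Ψ(u)) du = +∞. -/
theorem stmt8 (γ σ2 : ℝ → ℝ) (hγc : ContinuousOn γ (Set.Icc 0 1))
    (hσc : ContinuousOn σ2 (Set.Icc 0 1)) (hUE : ∀ u ∈ Set.Icc (0:ℝ) 1, 0 < σ2 u)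
    (hE1 : ∀ u ∈ Set.Ioo (0:ℝ) 1, 0 < Gam γ u - mg γ * u) :
    ∀ p : ℝ, pcrit γ σ2 < p →
      (∫⁻ u in Set.Ioo (0:ℝ) 1, ENNReal.ofReal (Real.exp (p * Psi γ σ2 u))) = ⊤ := by
  intro p hp
  obtain ⟨q, hq, hev⟩ := exists_one_lt_eventually_div_one_sub_lt hγc hσc
    (hUE 1 (right_mem_Icc.2 zero_le_one)) hE1 hp
  obtain ⟨l, hl, hlev⟩ := mem_nhdsLT_iff_exists_Ico_subset.1 hev
  set a := max l (1 / 2)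
  have ha1 : a < 1 := max_lt hl (by norm_num)
  have hbound : ∀ v ∈ Ico a 1, q / (1 - v) ≤ p * (σ2 v / (2 * (Gam γ v - mg γ * v))) :=
    fun v hv => (hlev ⟨le_of_max_le_left hv.1, hv.2⟩).le
  refine eq_top_iff.2 ?_
  calc ⊤ = ∫⁻ u in Ioo a 1, ENNReal.ofReal
        (Real.exp (p * Psi γ σ2 a + q * Real.log (1 - a)) * (1 - u) ^ (-q)) :=
        (lintegral_Ioo_mul_one_sub_rpow_neg_eq_top ha1 hq.le (Real.exp_pos _)).symm
    _ ≤ ∫⁻ u in Ioo a 1, ENNReal.ofReal (Real.exp (p * Psi γ σ2 u)) :=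
        setLIntegral_mono' measurableSet_Ioo fun u hu => ENNReal.ofReal_le_ofReal
          (exp_mul_one_sub_rpow_neg_le_exp_mul_Psi hγc hσc hE1 (le_max_right _ _) hu hbound)
    _ ≤ ∫⁻ u in Ioo 0 1, ENNReal.ofReal (Real.exp (p * Psi γ σ2 u)) :=
        lintegral_mono_set (Ioo_subset_Ioo_left (by positivity))
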